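/- arXiv:1708.07319 — 3 statements merged into one kernel-verified Lean document; each statement's English description precedes it below -/
import Mathlib

section
/- Let γ > 1, M1 > M2 > 0, and set ρ̃¹ = 1, ρ̃² = (M1/M2)^((γ−1)/(2γ)), ε = (√(M1·M2)/3)·(M1−M2)/(M1+M2), ρ¹ = M1 − ε, ρ² = (M2+ε)·ρ̃². Define pressures p¹ = (ρ¹)^(γ−1)·ρ̃¹ and p² = (ρ²)^(γ−1)·ρ̃². Then (p² − p¹)(ρ̃² − ρ̃¹) < 0. -/
theorem stmt_3 (γ M1 M2 : ℝ) (hγ : 1 < γ) (hM2 : 0 < M2) (hM : M2 < M1)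
    (ρt1 ρt2 ε ρ1 ρ2 p1 p2 : ℝ)
    (hρt1 : ρt1 = 1)
    (hρt2 : ρt2 = (M1 / M2) ^ ((γ - 1) / (2 * γ)))
    (hε : ε = (Real.sqrt (M1 * M2) / 3) * (M1 - M2) / (M1 + M2))
    (hρ1 : ρ1 = M1 - ε)
    (hρ2 : ρ2 = (M2 + ε) * ρt2)
    (hp1 : p1 = ρ1 ^ (γ - 1) * ρt1)
    (hp2 : p2 = ρ2 ^ (γ - 1) * ρt2) :
    (p2 - p1) * (ρt2 - ρt1) < 0 := by
  have hM1 : 0 < M1 := hM2.trans hM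
  have hγ0 : 0 < γ := by linarith
  have hγ1 : 0 < γ - 1 := by linarith
  have hεpos : 0 < ε := by
    rw [hε]
    have h1 : 0 < M1 - M2 := by linarith
    have h2 : 0 < M1 + M2 := by linarith
    have h3 : 0 < Real.sqrt (M1 * M2) := Real.sqrt_pos.2 (by positivity)
    positivity
  -- key inequality
  have key : (M2 + ε) * Real.sqrt (M1 / M2) < M1 - ε := by
    set a := Real.sqrt M1 with ha_def
    set b := Real.sqrt M2 with hb_def
    have ha : 0 < a := Real.sqrt_pos.2 hM1
    have hb : 0 < b := Real.sqrt_pos.2 hM2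
    have hba : b < a := Real.sqrt_lt_sqrt hM2.le hM
    have ha2 : a ^ 2 = M1 := Real.sq_sqrt hM1.le
    have hb2 : b ^ 2 = M2 := Real.sq_sqrt hM2.le
    have hab : Real.sqrt (M1 * M2) = a * b := Real.sqrt_mul hM1.le M2
    have hdiv : Real.sqrt (M1 / M2) = a / b := Real.sqrt_div hM1.le M2
    rw [hε, hab, hdiv, ← ha2, ← hb2]
    have hs : (0:ℝ) < a^2+b^2 := by positivity
    rw [← sub_pos]
    have hD : a^2 - a * b / 3 * (a^2 - b^2) / (a^2 + b^2)
        - (b^2 + a * b / 3 * (a^2 - b^2) / (a^2 + b^2)) * (a/b)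
        = a*b*(a-b)*2*(a^2-a*b+b^2)/(3*b*(a^2+b^2)) := by
      field_simp
      ring
    rw [hD]
    have h1 : 0 < a - b := by linarith
    have h2 : 0 < a^2 - a*b + b^2 := by nlinarith
    positivity
  have hr : 1 < M1 / M2 := (one_lt_div hM2).2 hM
  have hr0 : 0 < M1 / M2 := by positivity
  have hρt2gt : 1 < ρt2 := by
    rw [hρt2]
    exact Real.one_lt_rpow_iff_of_pos hr0 |>.2 (Or.inl ⟨hr, by positivity⟩)
  have hρt2pos : 0 < ρt2 := by linarith
  have hsq : 0 < Real.sqrt (M1 / M2) := Real.sqrt_pos.2 hr0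
  have hM2ε : 0 < M2 + ε := by linarith
  have hrt : ρt2 ^ (γ - 1) * ρt2 = Real.sqrt (M1 / M2) ^ (γ - 1) := by
    rw [hρt2, ← Real.rpow_mul hr0.le, ← Real.rpow_add hr0,
        Real.sqrt_eq_rpow, ← Real.rpow_mul hr0.le]
    congr 1
    field_simp
    ring
  have hp2eq : p2 = ((M2 + ε) * Real.sqrt (M1 / M2)) ^ (γ - 1) := by
    rw [hp2, hρ2, Real.mul_rpow hM2ε.le hρt2pos.le, mul_assoc, hrt,
        ← Real.mul_rpow hM2ε.le hsq.le]
  have hp1eq : p1 = (M1 - ε) ^ (γ - 1) := by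
    rw [hp1, hρ1, hρt1, mul_one]
  have hlt : p2 < p1 := by
    rw [hp1eq, hp2eq]
    exact Real.rpow_lt_rpow (by positivity) key hγ1
  have h1 : p2 - p1 < 0 := by linarith
  have h2 : 0 < ρt2 - ρt1 := by rw [hρt1]; linarith
  exact mul_neg_of_neg_of_pos h1 h2
end

section
/- Let γ > 1 and M1 > M2 > 0. For ε with 0 < ε < M1 − M2 satisfying (M1/M2)^((γ−1)/(2γ)) < (M1−ε)/(M2+ε) < (M1/M2)^(1/2), define ρ̃¹ = 1, ρ̃² = (M1/M2)^((γ−1)/(2γ)), ρ¹ = M1 − ε, ρ² = (M2+ε)·ρ̃², p¹ = (ρ¹)^(γ−1)·ρ̃¹, p² = (ρ²)^(γ−1)·ρ̃². Then (p² − p¹)(ρ² − ρ¹) < 0. -/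
theorem stmt_4 (γ M1 M2 ε : ℝ) (hγ : 1 < γ) (hM2 : 0 < M2) (hM : M2 < M1)
    (hε0 : 0 < ε) (hε1 : ε < M1 - M2)
    (hlo : (M1 / M2) ^ ((γ - 1) / (2 * γ)) < (M1 - ε) / (M2 + ε))
    (hhi : (M1 - ε) / (M2 + ε) < (M1 / M2) ^ ((1 : ℝ) / 2))
    (ρt1 ρt2 ρ1 ρ2 p1 p2 : ℝ)
    (hρt1 : ρt1 = 1)
    (hρt2 : ρt2 = (M1 / M2) ^ ((γ - 1) / (2 * γ)))
    (hρ1 : ρ1 = M1 - ε)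
    (hρ2 : ρ2 = (M2 + ε) * ρt2)
    (hp1 : p1 = ρ1 ^ (γ - 1) * ρt1)
    (hp2 : p2 = ρ2 ^ (γ - 1) * ρt2) :
    (p2 - p1) * (ρ2 - ρ1) < 0 := by
  set s : ℝ := M1 / M2 with hs
  have hγ0 : (0:ℝ) < γ := by linarith
  have hspos : 0 < s := div_pos (by linarith) hM2
  have hMε : (0:ℝ) < M2 + ε := by linarith
  have hρ1pos : 0 < ρ1 := by rw [hρ1]; linarith
  have hApos : 0 < ρt2 := by rw [hρt2]; exact Real.rpow_pos_of_pos hspos _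
  -- ρ2 < ρ1
  have hρlt : ρ2 < ρ1 := by
    rw [hρ2, hρ1, hρt2]
    have := (lt_div_iff₀ hMε).mp hlo
    linarith [this]
  -- key : p2 = (M2+ε)^(γ-1) * s^((γ-1)/2)
  have hAγ : ρt2 ^ (γ - 1) * ρt2 = s ^ ((γ - 1) / 2) := by
    rw [hρt2]
    nth_rewrite 2 [← Real.rpow_one (s ^ ((γ - 1) / (2 * γ)))]
    rw [← Real.rpow_mul hspos.le, ← Real.rpow_mul hspos.le,
      ← Real.rpow_add hspos]
    congr 1
    field_simp
    ring
  have hp2eq : p2 = (M2 + ε) ^ (γ - 1) * s ^ ((γ - 1) / 2) := by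
    rw [hp2, hρ2, Real.mul_rpow hMε.le hApos.le, mul_assoc, hAγ]
  -- p1 < p2
  have hplt : p1 < p2 := by
    rw [hp1, hρt1, mul_one, hp2eq]
    have h1 : ρ1 < (M2 + ε) * s ^ ((1:ℝ) / 2) := by
      rw [hρ1]
      have := (div_lt_iff₀ hMε).mp hhi
      linarith [this]
    calc ρ1 ^ (γ - 1) < ((M2 + ε) * s ^ ((1:ℝ)/2)) ^ (γ - 1) :=
          Real.rpow_lt_rpow hρ1pos.le h1 (by linarith)
      _ = (M2 + ε) ^ (γ - 1) * s ^ ((γ - 1) / 2) := by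
          rw [Real.mul_rpow hMε.le (Real.rpow_pos_of_pos hspos _).le,
            ← Real.rpow_mul hspos.le]
          ring_nf
  have hp2pos : 0 < p2 - p1 := by linarith
  exact mul_neg_of_pos_of_neg hp2pos (by linarith)
end

section
/- Let Ω ⊂ ℝ³ have finite positive measure and split into measurable A, B with |A| = |B| = |Ω|/2. Let (ρ¹,ρ̃¹) and (ρ²,ρ̃²) be the constant states from the pointwise non-monotonicity example (Section 5.1), and define density fields by taking state 1 on A, state 2 on B (field P) and swapped (field Q). Then ∫_Ω P ρ = ∫_Ω Q ρ and ∫_Ω P ρ̃ = ∫_Ω Q ρ̃ (mass conservation), while ∫_Ω (p(P) − p(Q))(ρ̃_P − ρ̃_Q) < 0, where p(ρ,ρ̃) = ρ^(γ−1)·ρ̃. -/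
/-!
Both fields put the two states on halves of equal measure, so their masses agree. The integrand
of the monotonicity functional is the same constant `(p(ρ¹, ρ̃¹) - p(ρ², ρ̃²)) (ρ̃¹ - ρ̃²)` on both
halves. With `ρ̃²` chosen as `(M1/M2)^((γ-1)/(2γ))` one gets `p(ρ², ρ̃²) = ((M2 + ε) √(M1/M2))^(γ-1)`,
and the choice of `ε` makes `(M2 + ε) √(M1/M2) < M1 - ε`; so the first factor is positive while
`ρ̃² > 1 = ρ̃¹` makes the second negative.
-/

open MeasureTheory Set

section TwoPieceFields

variable {α E : Type*} {A B : Set α}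

theorem indicator_add_indicator_of_mem_left [AddZeroClass E] (h : Disjoint A B) {x : α}
    (hx : x ∈ A) (f g : α → E) : A.indicator f x + B.indicator g x = f x := by
  rw [indicator_of_mem hx, indicator_of_notMem (h.notMem_of_mem_left hx), add_zero]

theorem indicator_add_indicator_of_mem_right [AddZeroClass E] (h : Disjoint A B) {x : α}
    (hx : x ∈ B) (f g : α → E) : A.indicator f x + B.indicator g x = g x := by
  rw [indicator_of_notMem (h.notMem_of_mem_right hx), indicator_of_mem hx, zero_add]

theorem setIntegral_indicator_const_add_indicator_const [MeasurableSpace α] {μ : Measure α}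
    [NormedAddCommGroup E] [NormedSpace ℝ E] [CompleteSpace E] (hA : MeasurableSet A) (hB : MeasurableSet B)
    (hfin : μ (A ∪ B) ≠ ⊤) (c d : E) :
    ∫ x in A ∪ B, A.indicator (fun _ => c) x + B.indicator (fun _ => d) x ∂μ
      = μ.real A • c + μ.real B • d := by
  have hint : ∀ (S : Set α) (e : E), MeasurableSet S →
      IntegrableOn (S.indicator fun _ => e) (A ∪ B) μ :=
    fun S e hS => (integrableOn_const hfin).indicator hS
  rw [integral_add (hint A c hA) (hint B d hB), setIntegral_indicator hA,
    setIntegral_indicator hB, union_inter_cancel_left, union_inter_cancel_right,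
    setIntegral_const, setIntegral_const]

end TwoPieceFields

section NonmonotoneExample

open Real

theorem add_mul_sqrt_div_lt_sub {M1 M2 ε : ℝ} (hM2 : 0 < M2) (hM : M2 < M1)
    (hε : ε = (√(M1 * M2) / 3) * (M1 - M2) / (M1 + M2)) :
    (M2 + ε) * √(M1 / M2) < M1 - ε := by
  obtain ⟨a, ha, rfl⟩ : ∃ a, 0 < a ∧ M1 = a ^ 2 := ⟨√M1, sqrt_pos.2 (by linarith), (sq_sqrt (by linarith)).symm⟩
  obtain ⟨b, hb, rfl⟩ : ∃ b, 0 < b ∧ M2 = b ^ 2 := ⟨√M2, sqrt_pos.2 hM2, (sq_sqrt hM2.le).symm⟩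
  have hba : b < a := by nlinarith
  rw [← mul_pow, sqrt_sq (by positivity)] at hε
  rw [sqrt_div' _ (by positivity), sqrt_sq ha.le, sqrt_sq hb.le, mul_div_assoc',
    div_lt_iff₀ hb]
  -- `ε (a + b) < a b (a - b)` because `(a + b)² < 3 (a² + b²)`
  have hε' : ε * (3 * (a ^ 2 + b ^ 2)) = a * b * (a ^ 2 - b ^ 2) := by
    rw [hε]; field_simp
  nlinarith [mul_pos (mul_pos ha hb) (sub_pos.2 hba), sq_nonneg (a - b)]

theorem mul_rpow_mul_rpow_eq_mul_sqrt_rpow {γ r q : ℝ} (hγ : γ ≠ 0) (hr : 0 ≤ r) (hq : 0 < q) :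
    (r * q ^ ((γ - 1) / (2 * γ))) ^ (γ - 1) * q ^ ((γ - 1) / (2 * γ))
      = (r * √q) ^ (γ - 1) := by
  rw [mul_rpow hr (by positivity), mul_assoc, mul_rpow hr (sqrt_nonneg q), sqrt_eq_rpow,
    ← rpow_mul hq.le, ← rpow_add hq, ← rpow_mul hq.le]
  congr 2
  field_simp
  ring

theorem pressure_sub_mul_density_sub_neg {γ M1 M2 ε ρt2 : ℝ} {p : ℝ → ℝ → ℝ}
    (hγ : 1 < γ) (hM2 : 0 < M2) (hM : M2 < M1)
    (hε : ε = (√(M1 * M2) / 3) * (M1 - M2) / (M1 + M2))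
    (hρt2 : ρt2 = (M1 / M2) ^ ((γ - 1) / (2 * γ))) (hp : ∀ r rt, p r rt = r ^ (γ - 1) * rt) :
    (p (M1 - ε) 1 - p ((M2 + ε) * ρt2) ρt2) * (1 - ρt2) < 0 := by
  have hq : 0 < M1 / M2 := div_pos (hM2.trans hM) hM2
  have hε_pos : 0 < ε := by
    rw [hε]
    exact div_pos (mul_pos (div_pos (sqrt_pos.2 (mul_pos (hM2.trans hM) hM2)) three_pos)
      (sub_pos.2 hM)) (by linarith)
  have hρt2_gt : 1 < ρt2 := hρt2 ▸ one_lt_rpow ((one_lt_div hM2).2 hM) (by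
    apply div_pos <;> linarith)
  have hp_lt : p ((M2 + ε) * ρt2) ρt2 < p (M1 - ε) 1 := by
    rw [hp, hp, mul_one, hρt2,
      mul_rpow_mul_rpow_eq_mul_sqrt_rpow (zero_lt_one.trans hγ).ne' (by linarith) hq]
    exact rpow_lt_rpow (mul_nonneg (by linarith) (sqrt_nonneg _))
      (add_mul_sqrt_div_lt_sub hM2 hM hε) (by linarith)
  exact mul_neg_of_pos_of_neg (sub_pos.2 hp_lt) (sub_neg.2 hρt2_gt)

end NonmonotoneExample

theorem stmt_18 (γ M1 M2 : ℝ) (hγ : 1 < γ) (hM2 : 0 < M2) (hM : M2 < M1)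
    (Ω A B : Set (Fin 3 → ℝ)) (hA : MeasurableSet A) (hB : MeasurableSet B)
    (hdisj : Disjoint A B) (hunion : A ∪ B = Ω)
    (hfin : volume Ω < ⊤) (hpos : 0 < volume Ω)
    (hvolA : volume A = volume Ω / 2) (hvolB : volume B = volume Ω / 2)
    (ε ρt1 ρt2 ρ1 ρ2 : ℝ)
    (hε : ε = (Real.sqrt (M1 * M2) / 3) * (M1 - M2) / (M1 + M2))
    (hρt1 : ρt1 = 1) (hρt2 : ρt2 = (M1 / M2) ^ ((γ - 1) / (2 * γ)))
    (hρ1 : ρ1 = M1 - ε) (hρ2 : ρ2 = (M2 + ε) * ρt2)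
    (p : ℝ → ℝ → ℝ) (hp : ∀ r rt, p r rt = r ^ (γ - 1) * rt)
    (ρP ρtP ρQ ρtQ : (Fin 3 → ℝ) → ℝ)
    (hρP : ∀ x, ρP x = A.indicator (fun _ => ρ1) x + B.indicator (fun _ => ρ2) x)
    (hρtP : ∀ x, ρtP x = A.indicator (fun _ => ρt1) x + B.indicator (fun _ => ρt2) x)
    (hρQ : ∀ x, ρQ x = A.indicator (fun _ => ρ2) x + B.indicator (fun _ => ρ1) x)
    (hρtQ : ∀ x, ρtQ x = A.indicator (fun _ => ρt2) x + B.indicator (fun _ => ρt1) x) :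
    (∫ x in Ω, ρP x = ∫ x in Ω, ρQ x) ∧
    (∫ x in Ω, ρtP x = ∫ x in Ω, ρtQ x) ∧
    (∫ x in Ω, (p (ρP x) (ρtP x) - p (ρQ x) (ρtQ x)) * (ρtP x - ρtQ x)) < 0 := by
  obtain rfl : ρP = _ := funext hρP
  obtain rfl : ρtP = _ := funext hρtP
  obtain rfl : ρQ = _ := funext hρQ
  obtain rfl : ρtQ = _ := funext hρtQ
  subst hunion
  have hAB : volume.real A = volume.real B := by simp only [Measure.real, hvolA, hvolB]
  have two_piece := setIntegral_indicator_const_add_indicator_const (μ := volume) (E := ℝ) hA hB hfin.ne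
  refine ⟨?_, ?_, ?_⟩
  · rw [two_piece, two_piece, hAB, add_comm]
  · rw [two_piece, two_piece, hAB, add_comm]
  have hK : (p ρ1 ρt1 - p ρ2 ρt2) * (ρt1 - ρt2) < 0 := by
    rw [hρt1, hρ1, hρ2]
    exact pressure_sub_mul_density_sub_neg hγ hM2 hM hε hρt2 hp
  -- the integrand takes the same value on both pieces, the swap flipping both factors
  rw [setIntegral_congr_fun (hA.union hB) (g := fun _ => (p ρ1 ρt1 - p ρ2 ρt2) * (ρt1 - ρt2)),
    setIntegral_const, smul_eq_mul]
  · exact mul_neg_of_pos_of_neg (ENNReal.toReal_pos hpos.ne' hfin.ne) hK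
  · rintro x (hx | hx)
    · simp only [indicator_add_indicator_of_mem_left hdisj hx]
    · simp only [indicator_add_indicator_of_mem_right hdisj hx]
      ring
end
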